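/- arXiv:0903.1367 — 16 statements merged into one kernel-verified Lean document; each statement's English description precedes it below -/
import Mathlib

section
/- Let a coherent system of sizes on the full power set P(U) be given, satisfying (iM). If X satisfies the robustness property (M++) in the form: A ∈ I(X), B ∉ F(X) implies A \ B ∈ I(X \ B), but X does not satisfy (<ω*s) (closure of I(X) under finite unions), then there exists Y ⊆ U which does not satisfy (2*s), i.e., there exist A, B ∈ I(Y) with A ∪ B = Y. -/
open Set

/-- In a coherent system of sizes on the full power set satisfying `(iM)`,
if `X` satisfies `(M++)` (version (1): `A ∈ I(X)`, `B ∉ F(X)` implies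
`A \ B ∈ I(X \ B)`), but `X` does not satisfy `(<ω*s)` (closure of `I(X)` under
finite unions), then there is a set `Y` failing `(2*s)`: there are
`A, B ∈ I(Y)` with `A ∪ B = Y`. -/
theorem stmt1 {α : Type*} (I : Set α → Set (Set α)) (X : Set α)
    (hsub : ∀ Z A : Set α, A ∈ I Z → A ⊆ Z)
    (hiM : ∀ Z A B : Set α, A ⊆ B → B ∈ I Z → A ∈ I Z)
    (hMpp : ∀ A B : Set α, A ⊆ X → B ⊆ X → A ∈ I X → X \ B ∉ I X →
      A \ B ∈ I (X \ B))
    (hnc : ∃ A B : Set α, A ∈ I X ∧ B ∈ I X ∧ A ∪ B ∉ I X) :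
    ∃ Y A B : Set α, A ∈ I Y ∧ B ∈ I Y ∧ A ∪ B = Y := by
  obtain ⟨A, B, hA, hB, hAB⟩ := hnc
  have hAX : A ⊆ X := hsub X A hA
  have hBX : B ⊆ X := hsub X B hB
  have hUX : A ∪ B ⊆ X := union_subset hAX hBX
  have hcomp : X \ (X \ (A ∪ B)) = A ∪ B := diff_diff_cancel_left hUX
  have hkey : X \ (X \ (A ∪ B)) ∉ I X := by rw [hcomp]; exact hAB
  have h1 := hMpp A (X \ (A ∪ B)) hAX diff_subset hA hkey
  have h2 := hMpp B (X \ (A ∪ B)) hBX diff_subset hB hkey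
  rw [hcomp] at h1 h2
  have hA' : A \ (X \ (A ∪ B)) = A := by
    ext x; simp (config := { contextual := true }) [hAX _]
  have hB' : B \ (X \ (A ∪ B)) = B := by
    ext x; simp (config := { contextual := true }) [hBX _]
  rw [hA'] at h1
  rw [hB'] at h2
  exact ⟨A ∪ B, A, B, h1, h2, rfl⟩
end

section
/- The external monotony properties (eMI) and (eMF) are formally independent: there exists a coherent system of sizes satisfying (Opt), (iM), (eMI), and closure of ideals under finite unions, but not (eMF); and there exists a coherent system satisfying (Opt), (iM), (eMF), and closure of ideals under finite unions, but not (eMI). (Witness: take U = {x, y, z} with suitable filter assignments.) -/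
open Set

/-- `(eMI)` and `(eMF)` are formally independent: there is a coherent system of
sizes (on `U = {x,y,z}`, with the domain being the nonempty subsets) satisfying
`(Opt)`, `(iM)`, `(eMI)` and closure of the ideals under finite unions but not
`(eMF)`, and one satisfying `(Opt)`, `(iM)`, `(eMF)` and closure of the ideals
under finite unions but not `(eMI)`. -/
theorem stmt2 :
    (∃ I : Set (Fin 3) → Set (Set (Fin 3)),
      (∀ X A : Set (Fin 3), X.Nonempty → A ∈ I X → A ⊆ X) ∧
      -- (Opt)
      (∀ X : Set (Fin 3), X.Nonempty → (∅ : Set (Fin 3)) ∈ I X) ∧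
      -- (iM)
      (∀ X A B : Set (Fin 3), X.Nonempty → A ⊆ B → B ∈ I X → A ∈ I X) ∧
      -- (eMI)
      (∀ X Y : Set (Fin 3), X.Nonempty → Y.Nonempty → X ⊆ Y → I X ⊆ I Y) ∧
      -- closure of ideals under finite unions
      (∀ X A B : Set (Fin 3), X.Nonempty → A ∈ I X → B ∈ I X → A ∪ B ∈ I X) ∧
      -- not (eMF)
      ¬ (∀ X Y A : Set (Fin 3), X.Nonempty → Y.Nonempty → X ⊆ Y → A ⊆ X →
          Y \ A ∈ I Y → X \ A ∈ I X))
    ∧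
    (∃ I : Set (Fin 3) → Set (Set (Fin 3)),
      (∀ X A : Set (Fin 3), X.Nonempty → A ∈ I X → A ⊆ X) ∧
      -- (Opt)
      (∀ X : Set (Fin 3), X.Nonempty → (∅ : Set (Fin 3)) ∈ I X) ∧
      -- (iM)
      (∀ X A B : Set (Fin 3), X.Nonempty → A ⊆ B → B ∈ I X → A ∈ I X) ∧
      -- (eMF)
      (∀ X Y A : Set (Fin 3), X.Nonempty → Y.Nonempty → X ⊆ Y → A ⊆ X →
          Y \ A ∈ I Y → X \ A ∈ I X) ∧
      -- closure of ideals under finite unions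
      (∀ X A B : Set (Fin 3), X.Nonempty → A ∈ I X → B ∈ I X → A ∪ B ∈ I X) ∧
      -- not (eMI)
      ¬ (∀ X Y : Set (Fin 3), X.Nonempty → Y.Nonempty → X ⊆ Y → I X ⊆ I Y)) := by

  constructor
  · -- eMI but not eMF: I X = P({1,2}) if X = univ, else {∅}
    refine ⟨fun X => {A | A ⊆ ({1,2} : Set (Fin 3)) ∧ (X ≠ univ → A = ∅)}, ?_, ?_, ?_, ?_, ?_, ?_⟩
    · intro X A _ hA
      by_cases h : X = univ
      · subst h; exact subset_univ A
      · rw [hA.2 h]; exact empty_subset X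
    · intro X _; exact ⟨empty_subset _, fun _ => rfl⟩
    · intro X A B _ hAB hB
      refine ⟨hAB.trans hB.1, fun h => ?_⟩
      rw [hB.2 h] at hAB
      exact subset_empty_iff.mp hAB
    · intro X Y _ _ hXY A hA
      refine ⟨hA.1, fun hY => ?_⟩
      apply hA.2
      intro hX; subst hX
      exact hY (univ_subset_iff.mp hXY)
    · intro X A B _ hA hB
      refine ⟨union_subset hA.1 hB.1, fun h => ?_⟩
      rw [hA.2 h, hB.2 h, union_empty]
    · intro h
      have h2 := h ({0,1} : Set (Fin 3)) univ ({0} : Set (Fin 3))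
        ⟨0, by simp⟩ ⟨0, by simp⟩ (subset_univ _) (by simp)
        (by
          constructor
          · intro a ha
            simp only [mem_diff, mem_univ, true_and, mem_singleton_iff] at ha
            fin_cases a <;> simp_all
          · intro hu; exact absurd rfl hu)
      have h1 : (1 : Fin 3) ∈ (({0,1} : Set (Fin 3)) \ {0}) := by
        constructor <;> simp
      have := h2.2 (by
        intro hu
        have : (2 : Fin 3) ∈ ({0,1} : Set (Fin 3)) := hu ▸ mem_univ _
        simp at this)
      rw [this] at h1
      exact h1
  · -- eMF but not eMI
    refine ⟨fun X => {A | A ⊆ X ∧ (X = univ → A ⊆ ({2} : Set (Fin 3))) ∧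
        (X = ({0,1} : Set (Fin 3)) → A ⊆ ({1} : Set (Fin 3)))}, ?_, ?_, ?_, ?_, ?_, ?_⟩
    · intro X A _ hA; exact hA.1
    · intro X _; exact ⟨empty_subset _, fun _ => empty_subset _, fun _ => empty_subset _⟩
    · intro X A B _ hAB hB
      exact ⟨hAB.trans hB.1, fun h => hAB.trans (hB.2.1 h), fun h => hAB.trans (hB.2.2 h)⟩
    · -- eMF
      intro X Y A _ _ hXY hAX hY
      refine ⟨diff_subset, fun hX => ?_, fun hX => ?_⟩
      · subst hX
        have hYu : Y = univ := univ_subset_iff.mp hXY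
        subst hYu
        exact hY.2.1 rfl
      · subst hX
        -- need X \ A ⊆ {1}, i.e. 0 ∈ A ∨ 0 ∉ {0,1}; Y ⊇ {0,1}
        have h0 : (0 : Fin 3) ∈ A := by
          by_cases hYu : Y = univ
          · have := hY.2.1 hYu
            by_contra h0
            have : (0 : Fin 3) ∈ ({2} : Set (Fin 3)) := this ⟨hYu ▸ mem_univ _, h0⟩
            exact absurd this (by decide)
          · have hYe : Y = ({0,1} : Set (Fin 3)) := by
              by_contra hne
              apply hYu
              have h2Y : (2 : Fin 3) ∈ Y := by
                by_contra h2
                apply hne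
                apply Subset.antisymm _ hXY
                intro a ha
                fin_cases a
                · simp
                · simp
                · exact absurd ha h2
              apply eq_univ_of_forall
              intro a
              fin_cases a
              · exact hXY (by simp)
              · exact hXY (by simp)
              · exact h2Y
            have := hY.2.2 hYe
            by_contra h0
            have h01 : (0 : Fin 3) ∈ Y \ A := ⟨hYe ▸ (by simp), h0⟩
            have : (0 : Fin 3) ∈ ({1} : Set (Fin 3)) := this h01
            exact absurd this (by decide)
        intro a ha
        have haX : a ∈ ({0,1} : Set (Fin 3)) := ha.1
        fin_cases a
        · exact absurd h0 ha.2
        · simp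
        · exact absurd haX (by decide)
    · intro X A B _ hA hB
      exact ⟨union_subset hA.1 hB.1, fun h => union_subset (hA.2.1 h) (hB.2.1 h),
        fun h => union_subset (hA.2.2 h) (hB.2.2 h)⟩
    · intro h
      have h2 := h ({0,1} : Set (Fin 3)) univ ⟨0, by simp⟩ ⟨0, by simp⟩ (subset_univ _)
        (a := ({1} : Set (Fin 3)))
        ⟨by intro a ha; simp only [mem_singleton_iff] at ha; subst ha; simp,
         fun hX => absurd hX (by
            intro hu
            have : (2 : Fin 3) ∈ ({0,1} : Set (Fin 3)) := hu ▸ mem_univ _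
            exact absurd this (by decide)),
         fun _ => Subset.rfl⟩
      have := h2.2.1 rfl
      have h1 : (1 : Fin 3) ∈ ({2} : Set (Fin 3)) := this rfl
      exact absurd h1 (by decide)
end

section
/- For every n ≥ 1 there is a coherent system of sizes satisfying (Opt), (iM), (eMI), (eMF), and (n*s), but not ((n+1)*s). (Witness: U = {1,…,n+1}, I(U) = {∅} ∪ {singletons}, I(X) = {∅} for X ≠ U.) -/
open Set

lemma card_bound {n : ℕ} (A : Fin n → Set (Fin (n+1)))
    (h : ∀ i, (A i).Subsingleton) : (⋃ i, A i) ≠ univ := by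
  intro hu
  have hx : ∀ x : Fin (n+1), ∃ i, x ∈ A i := by
    intro x
    have : x ∈ ⋃ i, A i := hu ▸ mem_univ x
    simpa using this
  choose g hg using hx
  have hinj : Function.Injective g := by
    intro x y hxy
    exact h (g x) (hg x) (hxy ▸ hg y)
  have := Fintype.card_le_of_injective g hinj
  simp at this

/-- For every `n ≥ 1` there is a coherent system of sizes satisfying `(Opt)`,
`(iM)`, `(eMI)`, `(eMF)` and `(n*s)` (no union of `n` small subsets of a
nonempty `X` equals `X`), but not `((n+1)*s)`. Hence level `n` systems are
strictly weaker than level `n+1` systems. -/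
theorem stmt3 : ∀ n : ℕ, 1 ≤ n →
    ∃ (α : Type) (I : Set α → Set (Set α)),
      (∀ X A : Set α, X.Nonempty → A ∈ I X → A ⊆ X) ∧
      -- (Opt)
      (∀ X : Set α, X.Nonempty → (∅ : Set α) ∈ I X) ∧
      -- (iM)
      (∀ X A B : Set α, X.Nonempty → A ⊆ B → B ∈ I X → A ∈ I X) ∧
      -- (eMI)
      (∀ X Y : Set α, X.Nonempty → Y.Nonempty → X ⊆ Y → I X ⊆ I Y) ∧
      -- (eMF)
      (∀ X Y A : Set α, X.Nonempty → Y.Nonempty → X ⊆ Y → A ⊆ X →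
          Y \ A ∈ I Y → X \ A ∈ I X) ∧
      -- (n*s)
      (∀ X : Set α, X.Nonempty → ∀ A : Fin n → Set α,
          (∀ i, A i ∈ I X) → (⋃ i, A i) ≠ X) ∧
      -- not ((n+1)*s)
      ¬ (∀ X : Set α, X.Nonempty → ∀ A : Fin (n + 1) → Set α,
          (∀ i, A i ∈ I X) → (⋃ i, A i) ≠ X) := by
  intro n hn
  classical
  refine ⟨Fin (n+1), fun X => if X = univ then {A | A.Subsingleton} else {∅},
    ?_, ?_, ?_, ?_, ?_, ?_, ?_⟩
  · intro X A _ hA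
    by_cases hX : X = univ
    · simp [hX]
    · simp [hX] at hA
      simp [hA]
  · intro X _
    by_cases hX : X = univ <;> simp [hX, Set.subsingleton_empty]
  · intro X A B _ hAB hB
    by_cases hX : X = univ <;> simp [hX] at hB ⊢
    · exact hB.anti hAB
    · rw [hB, subset_empty_iff] at hAB; exact hAB
  · intro X Y _ _ hXY A hA
    by_cases hX : X = univ
    · have hY : Y = univ := univ_subset_iff.mp (hX ▸ hXY)
      simpa [hX, hY] using hA
    · simp [hX] at hA
      subst hA
      by_cases hY : Y = univ <;> simp [hY, Set.subsingleton_empty]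
  · intro X Y A _ _ hXY hAX hYA
    by_cases hY : Y = univ
    · simp [hY] at hYA
      by_cases hX : X = univ
      · simp [hX]
        exact hYA
      · have hXA : X \ A = ∅ := by
          by_contra h
          obtain ⟨x, hxX, hxA⟩ := nonempty_iff_ne_empty.mpr h
          obtain ⟨y, hy⟩ : ∃ y, y ∉ X := by
            by_contra h2
            push_neg at h2
            exact hX (eq_univ_of_forall h2)
          have hyA : y ∉ A := fun hyA => hy (hAX hyA)
          have : x = y := hYA ⟨mem_univ x, hxA⟩ ⟨mem_univ y, hyA⟩
          exact hy (this ▸ hxX)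
        simp [hX, hXA]
    · simp [hY] at hYA
      have hXA : X \ A = ∅ :=
        subset_empty_iff.mp (hYA ▸ diff_subset_diff_left hXY)
      by_cases hX : X = univ <;> simp [hX, hXA, Set.subsingleton_empty]
      · rw [hX] at hXA; simp [hXA, Set.subsingleton_empty]
  · intro X hXne A hA h
    by_cases hX : X = univ
    · subst hX
      refine card_bound A (fun i => ?_) h
      have := hA i; simpa using this
    · have h0 : ∀ i, A i = ∅ := fun i => by have := hA i; simpa [hX] using this
      have : (⋃ i, A i) = ∅ := by simp [h0]
      rw [this] at h
      exact hXne.ne_empty h.symm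
  · intro h
    exact h univ univ_nonempty (fun i => {i})
      (fun i => by simp)
      (by ext x; simp)
end

section
/- Assume a coherent system of sizes satisfies (eMI) and (I_n) (the union of n small subsets of X is never all of X). Then (M⁺_n) holds: if X₁ ⊆ X₂ ⊆ … ⊆ Xₙ and Xᵢ ∈ F(X_{i+1}) for 1 ≤ i ≤ n−1, then X₁ ∉ I(Xₙ). -/
open Set

/-- `(I_n)` together with `(eMI)` implies `(M⁺_n)`: for a chain
`X₁ ⊆ X₂ ⊆ … ⊆ Xₙ` with `Xᵢ ∈ F(X_{i+1})` for `1 ≤ i ≤ n-1`,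
we get `X₁ ∉ I(Xₙ)`, i.e. `X₁ ∈ M⁺(Xₙ)`.  (Here `C i` stands for `X_{i+1}`,
`i = 0, …, n-1`, and `Xᵢ ∈ F(X_{i+1})` is `Xᵢ ⊆ X_{i+1} ∧ X_{i+1} \ Xᵢ ∈ I(X_{i+1})`.) -/
theorem stmt4 {α : Type*} (I : Set α → Set (Set α)) (n : ℕ) (hn : 1 ≤ n)
    (hsub : ∀ X A : Set α, A ∈ I X → A ⊆ X)
    -- (eMI)
    (heMI : ∀ X Y : Set α, X ⊆ Y → I X ⊆ I Y)
    -- (I_n)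
    (hIn : ∀ X : Set α, ∀ A : Fin n → Set α, (∀ i, A i ∈ I X) → (⋃ i, A i) ≠ X)
    (C : ℕ → Set α)
    (hchain : ∀ i, i < n - 1 → C i ⊆ C (i + 1) ∧ C (i + 1) \ C i ∈ I (C (i + 1))) :
    C 0 ∉ I (C (n - 1)) := by
  intro h0
  -- monotonicity of the chain up to n-1
  have mono : ∀ j, j ≤ n - 1 → ∀ i, i ≤ j → C i ⊆ C j := by
    intro j
    induction j with
    | zero => intro _ i hi; interval_cases i; exact subset_rfl
    | succ k ih =>
      intro hj i hi
      rcases Nat.lt_or_ge i (k + 1) with hlt | hge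
      · exact (ih (Nat.le_of_succ_le hj) i (Nat.lt_succ_iff.mp hlt)).trans
          (hchain k (Nat.lt_of_lt_of_le (Nat.lt_succ_self k) hj)).1
      · have : i = k + 1 := le_antisymm hi hge
        subst this; exact subset_rfl
  set A : Fin n → Set α := fun i =>
    if i.val = 0 then C 0 else C i.val \ C (i.val - 1) with hA
  have hmem : ∀ i, A i ∈ I (C (n - 1)) := by
    intro i
    simp only [hA]
    split
    · exact h0
    · rename_i hne
      have h1 : 1 ≤ i.val := Nat.one_le_iff_ne_zero.mpr hne
      have hlt : i.val - 1 < n - 1 := by omega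
      have := (hchain (i.val - 1) hlt).2
      have heq : i.val - 1 + 1 = i.val := by omega
      rw [heq] at this
      exact heMI _ _ (mono (n - 1) le_rfl i.val (by omega)) this
  apply hIn (C (n - 1)) A hmem
  apply subset_antisymm
  · exact iUnion_subset fun i => hsub _ _ (hmem i)
  · -- every x in C (n-1) is in some A i
    have key : ∀ j, j ≤ n - 1 → ∀ x, x ∈ C j → x ∈ ⋃ i, A i := by
      intro j
      induction j with
      | zero =>
        intro _ x hx
        exact mem_iUnion.mpr ⟨⟨0, by omega⟩, by simp [hA]; exact hx⟩
      | succ k ih =>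
        intro hj x hx
        by_cases hxk : x ∈ C k
        · exact ih (Nat.le_of_succ_le hj) x hxk
        · refine mem_iUnion.mpr ⟨⟨k + 1, by omega⟩, ?_⟩
          simp only [hA]
          rw [if_neg (by omega)]
          exact ⟨hx, hxk⟩
    exact fun x hx => key (n - 1) le_rfl x hx
end

section
/- Assume the consequence relation α |∼ β is defined by: M(α ∧ ¬β) ∈ I(M(α)), where I satisfies (eMI) and (I_n). Then the rule (CM_n) holds: if α |∼ β₁, …, α |∼ β_{n−1}, then it is not the case that α ∧ β₁ ∧ … ∧ β_{n−2} |∼ ¬β_{n−1}. -/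
open Set

/-- If `α |∼ β` is defined by `M(α ∧ ¬β) ∈ I(M(α))` and `I` satisfies `(eMI)` and
`(I_n)`, then `(CM_n)` holds: if `α |∼ β₁, …, α |∼ β_{n-1}`, then it is not the
case that `α ∧ β₁ ∧ … ∧ β_{n-2} |∼ ¬β_{n-1}`.  In set terms, with `X = M(α)` and
`B i = M(β_{i+1})`: if `X \ B i ∈ I X` for all `i < n-1`, then
`(X ∩ ⋂_{i<n-2} B i) ∩ B (n-2) ∉ I (X ∩ ⋂_{i<n-2} B i)`. -/
theorem stmt5 {α : Type*} (I : Set α → Set (Set α)) (n : ℕ) (hn : 2 ≤ n)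
    (hsub : ∀ X A : Set α, A ∈ I X → A ⊆ X)
    -- (eMI)
    (heMI : ∀ X Y : Set α, X ⊆ Y → I X ⊆ I Y)
    -- (I_n)
    (hIn : ∀ X : Set α, ∀ A : ℕ → Set α, (∀ i < n, A i ∈ I X) →
      (⋃ i ∈ Finset.range n, A i) ≠ X)
    (X : Set α) (B : ℕ → Set α)
    (hB : ∀ i < n - 1, X \ B i ∈ I X) :
    (X ∩ ⋂ i ∈ Finset.range (n - 2), B i) ∩ B (n - 2)
      ∉ I (X ∩ ⋂ i ∈ Finset.range (n - 2), B i) := by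
  intro hC
  set Y : Set α := X ∩ ⋂ i ∈ Finset.range (n - 2), B i with hY
  set C : Set α := Y ∩ B (n - 2) with hCdef
  have hYX : Y ⊆ X := inter_subset_left
  have hCX : C ∈ I X := heMI Y X hYX hC
  set A : ℕ → Set α := fun i => if i < n - 1 then X \ B i else C with hA
  apply hIn X A
  · intro i hi
    by_cases h : i < n - 1
    · simpa [hA, h] using hB i h
    · simpa [hA, h] using hCX
  · apply Set.Subset.antisymm
    · apply Set.iUnion₂_subset
      intro i hi
      by_cases h : i < n - 1
      · simp only [hA, if_pos h]
        exact diff_subset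
      · simp only [hA, if_neg h]
        exact hsub X C hCX
    · intro x hx
      by_cases h : ∃ i, i < n - 1 ∧ x ∉ B i
      · obtain ⟨i, hi, hxi⟩ := h
        refine Set.mem_biUnion (Finset.mem_range.2 (lt_of_lt_of_le hi (Nat.sub_le n 1))) ?_
        simp [hA, hi, hx, hxi]
      · push_neg at h
        have hxY : x ∈ Y := by
          refine ⟨hx, ?_⟩
          simp only [Set.mem_iInter]
          intro i hi
          have := Finset.mem_range.1 hi
          exact h i (by omega)
        have hxC : x ∈ C := ⟨hxY, h (n - 2) (by omega)⟩
        have hn1 : n - 1 < n := by omega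
        refine Set.mem_biUnion (Finset.mem_range.2 hn1) ?_
        simp [hA, hxC]
end

section
/- For each n ≥ 3 there exists a coherent system of sizes on X = {1,…,n} satisfying (Opt), (iM), (eMI), (eMF), (1*s), (2*s), and the rules (OR_n), (M⁺_n), and (CM_n), but failing (I_n). Hence (I_n) is strictly stronger than the conjunction of (OR_n), (M⁺_n), (CM_n) in the presence of the basic rules. (Witness: I(X) = {∅} ∪ {singletons}, I(Y) = {∅} for all proper nonempty Y ⊂ X.) -/
open Set

lemma aux_exists_ne_ne {n : ℕ} (hn : 3 ≤ n) (x y : Fin n) :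
    ∃ z : Fin n, z ≠ x ∧ z ≠ y := by
  by_contra h
  push_neg at h
  have hsub : (Finset.univ : Finset (Fin n)) ⊆ {x, y} := by
    intro z _
    rcases Classical.em (z = x) with h1 | h1
    · simp [h1]
    · simp [h z h1]
  have := Finset.card_le_card hsub
  simp [Finset.card_univ] at this
  have h2 : ({x, y} : Finset (Fin n)).card ≤ 2 :=
    (Finset.card_insert_le _ _).trans (by simp)
  omega

lemma aux_exists_not_mem {n : ℕ} (S : Finset (Fin n)) (h : S.card < n) :
    ∃ z : Fin n, z ∉ S := by
  by_contra h'
  push_neg at h'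
  have hsub : (Finset.univ : Finset (Fin n)) ⊆ S := fun z _ => h' z
  have := Finset.card_le_card hsub
  simp [Finset.card_univ] at this
  omega


/-- For each `n ≥ 3` there is a coherent system of sizes on `X = {1,…,n}`
(modelled as `Fin n`, with domain the nonempty subsets) satisfying `(Opt)`,
`(iM)`, `(eMI)`, `(eMF)`, `(1*s)`, `(2*s)`, and the rules `(OR_n)`, `(M⁺_n)`
and `(CM_n)`, but failing `(I_n)`.  Hence `(I_n)` is strictly stronger than the
conjunction of `(OR_n)`, `(M⁺_n)`, `(CM_n)` in the presence of the basic rules. -/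
theorem stmt7 : ∀ n : ℕ, 3 ≤ n →
    ∃ I : Set (Fin n) → Set (Set (Fin n)),
      (∀ X A : Set (Fin n), X.Nonempty → A ∈ I X → A ⊆ X) ∧
      -- (Opt)
      (∀ X : Set (Fin n), X.Nonempty → (∅ : Set (Fin n)) ∈ I X) ∧
      -- (iM)
      (∀ X A B : Set (Fin n), X.Nonempty → A ⊆ B → B ∈ I X → A ∈ I X) ∧
      -- (eMI)
      (∀ X Y : Set (Fin n), X.Nonempty → Y.Nonempty → X ⊆ Y → I X ⊆ I Y) ∧
      -- (eMF)
      (∀ X Y A : Set (Fin n), X.Nonempty → Y.Nonempty → X ⊆ Y → A ⊆ X →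
          Y \ A ∈ I Y → X \ A ∈ I X) ∧
      -- (1*s)
      (∀ X : Set (Fin n), X.Nonempty → X ∉ I X) ∧
      -- (2*s)
      (∀ X A B : Set (Fin n), X.Nonempty → A ∈ I X → B ∈ I X → A ∪ B ≠ X) ∧
      -- (OR_n): α₁ |∼ β, …, α_{n-1} |∼ β  ⇒  α₁ ∨ … ∨ α_{n-1} |̸∼ ¬β
      (∀ (Xs : ℕ → Set (Fin n)) (B : Set (Fin n)),
          (∀ i < n - 1, (Xs i).Nonempty) →
          (∀ i < n - 1, Xs i \ B ∈ I (Xs i)) →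
          (⋃ i ∈ Finset.range (n - 1), Xs i) ∩ B
            ∉ I (⋃ i ∈ Finset.range (n - 1), Xs i)) ∧
      -- (M⁺_n): X₁ ∈ F(X₂), …, X_{n-1} ∈ F(Xₙ)  ⇒  X₁ ∉ I(Xₙ)
      (∀ C : ℕ → Set (Fin n),
          (∀ i < n, (C i).Nonempty) →
          (∀ i < n - 1, C i ⊆ C (i + 1) ∧ C (i + 1) \ C i ∈ I (C (i + 1))) →
          C 0 ∉ I (C (n - 1))) ∧
      -- (CM_n): α |∼ β₁, …, α |∼ β_{n-1}  ⇒  α ∧ β₁ ∧ … ∧ β_{n-2} |̸∼ ¬β_{n-1}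
      (∀ (X : Set (Fin n)) (B : ℕ → Set (Fin n)), X.Nonempty →
          (∀ i < n - 1, X \ B i ∈ I X) →
          (X ∩ ⋂ i ∈ Finset.range (n - 2), B i) ∩ B (n - 2)
            ∉ I (X ∩ ⋂ i ∈ Finset.range (n - 2), B i)) ∧
      -- (I_n) fails
      ¬ (∀ X : Set (Fin n), X.Nonempty → ∀ A : ℕ → Set (Fin n),
          (∀ i < n, A i ∈ I X) → (⋃ i ∈ Finset.range n, A i) ≠ X) := by
  intro n hn
  refine ⟨fun X => {A | A = ∅ ∨ (X = univ ∧ ∃ x, A = {x})},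
    ?_, ?_, ?_, ?_, ?_, ?_, ?_, ?_, ?_, ?_, ?_⟩
  -- subset
  · rintro X A _ (rfl | ⟨rfl, x, rfl⟩)
    · exact empty_subset _
    · exact subset_univ _
  -- Opt
  · exact fun X _ => Or.inl rfl
  -- iM
  · rintro X A B _ hAB (rfl | ⟨rfl, x, rfl⟩)
    · exact Or.inl (eq_empty_of_subset_empty hAB)
    · rcases subset_singleton_iff_eq.mp hAB with rfl | rfl
      · exact Or.inl rfl
      · exact Or.inr ⟨rfl, x, rfl⟩
  -- eMI
  · rintro X Y _ _ hXY A (rfl | ⟨rfl, x, rfl⟩)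
    · exact Or.inl rfl
    · exact Or.inr ⟨eq_univ_of_univ_subset hXY, x, rfl⟩
  -- eMF
  · rintro X Y A hX hY hXY hAX (h | ⟨rfl, y, hy⟩)
    · left
      rw [diff_eq_empty]
      exact hXY.trans (diff_eq_empty.mp h)
    · have hsub : X \ A ⊆ {y} := fun z hz => hy ▸ ⟨mem_univ z, hz.2⟩
      rcases subset_singleton_iff_eq.mp hsub with h0 | h1
      · exact Or.inl h0
      · have hyX : y ∈ X := (h1 ▸ (mem_singleton y) : y ∈ X \ A).1
        have hXu : X = univ := by
          apply eq_univ_iff_forall.mpr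
          intro a
          by_cases ha : a = y
          · exact ha ▸ hyX
          · have : a ∈ A := by
              by_contra haA
              have : a ∈ ({y} : Set (Fin n)) := hy ▸ ⟨mem_univ a, haA⟩
              exact ha this
            exact hAX this
        exact Or.inr ⟨hXu, y, h1⟩
  -- 1*s
  · rintro X hX (h | ⟨rfl, x, hx⟩)
    · exact hX.ne_empty h
    · obtain ⟨z, hz, -⟩ := aux_exists_ne_ne hn x x
      have : z ∈ (univ : Set (Fin n)) := mem_univ z
      rw [hx] at this
      exact hz this
  -- 2*s
  · rintro X A B hX (rfl | ⟨rfl, a, rfl⟩) hB hU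
    · rcases hB with rfl | ⟨rfl, b, rfl⟩
      · exact hX.ne_empty (by simpa using hU.symm)
      · obtain ⟨z, hz, -⟩ := aux_exists_ne_ne hn b b
        have : z ∈ (∅ ∪ {b} : Set (Fin n)) := hU.symm ▸ mem_univ z
        simp at this
        exact hz this
    · rcases hB with rfl | ⟨-, b, rfl⟩
      · obtain ⟨z, hz, -⟩ := aux_exists_ne_ne hn a a
        have : z ∈ ({a} ∪ ∅ : Set (Fin n)) := hU.symm ▸ mem_univ z
        simp at this
        exact hz this
      · obtain ⟨z, hza, hzb⟩ := aux_exists_ne_ne hn a b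
        have : z ∈ ({a} ∪ {b} : Set (Fin n)) := hU.symm ▸ mem_univ z
        simp at this
        tauto
  -- OR_n
  · rintro Xs B hne hsm (h | ⟨hU, w, hw⟩)
    · have h0 : 0 < n - 1 := by omega
      rcases hsm 0 h0 with h1 | ⟨hXu, x, hx⟩
      · obtain ⟨a, ha⟩ := hne 0 h0
        have haU : a ∈ ⋃ i ∈ Finset.range (n - 1), Xs i :=
          mem_biUnion (Finset.mem_range.mpr h0) ha
        have : a ∈ (⋃ i ∈ Finset.range (n - 1), Xs i) ∩ B :=
          ⟨haU, diff_eq_empty.mp h1 ha⟩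
        rw [h] at this
        exact this
      · obtain ⟨z, hz, -⟩ := aux_exists_ne_ne hn x x
        have hzB : z ∈ B := by
          by_contra hzB
          have : z ∈ Xs 0 \ B := ⟨hXu ▸ mem_univ z, hzB⟩
          rw [hx] at this
          exact hz this
        have hzU : z ∈ ⋃ i ∈ Finset.range (n - 1), Xs i :=
          mem_biUnion (Finset.mem_range.mpr h0) (hXu ▸ mem_univ z)
        have : z ∈ (⋃ i ∈ Finset.range (n - 1), Xs i) ∩ B := ⟨hzU, hzB⟩
        rw [h] at this
        exact this
    · have hB : B = {w} := by
        rw [← hw, hU, univ_inter]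
      have hclaim : ∀ i < n - 1, Xs i ⊆ {w} := by
        intro i hi
        rcases hsm i hi with h1 | ⟨hXu, x, hx⟩
        · exact hB ▸ diff_eq_empty.mp h1
        · exfalso
          rw [hXu, hB] at hx
          obtain ⟨z, hzw, hzx⟩ := aux_exists_ne_ne hn w x
          have : z ∈ ({x} : Set (Fin n)) := hx ▸ ⟨mem_univ z, hzw⟩
          exact hzx this
      have hUsub : (⋃ i ∈ Finset.range (n - 1), Xs i) ⊆ {w} :=
        iUnion₂_subset fun i hi => hclaim i (Finset.mem_range.mp hi)
      obtain ⟨z, hz, -⟩ := aux_exists_ne_ne hn w w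
      have : z ∈ ({w} : Set (Fin n)) := hUsub (hU ▸ mem_univ z)
      exact hz this
  -- M⁺_n
  · rintro C hCne hstep (h | ⟨hCu, x, hx⟩)
    · exact (hCne 0 (by omega)).ne_empty h
    · have key : ∀ j, j ≤ n - 1 → C j = {x} := by
        intro j
        induction j with
        | zero => exact fun _ => hx
        | succ j ih =>
          intro hj
          have hj' : j < n - 1 := by omega
          have hCj : C j = {x} := ih (le_of_lt hj')
          obtain ⟨hsub, hsm⟩ := hstep j hj'
          rcases hsm with h1 | ⟨hCju, y, hy⟩
          · exact (subset_antisymm (diff_eq_empty.mp h1) hsub).trans hCj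
          · exfalso
            rw [hCju, hCj] at hy
            obtain ⟨z, hzx, hzy⟩ := aux_exists_ne_ne hn x y
            have : z ∈ ({y} : Set (Fin n)) := hy ▸ ⟨mem_univ z, hzx⟩
            exact hzy this
      have h1 : C (n - 1) = {x} := key (n - 1) le_rfl
      rw [hCu] at h1
      obtain ⟨z, hz, -⟩ := aux_exists_ne_ne hn x x
      have : z ∈ ({x} : Set (Fin n)) := h1 ▸ mem_univ z
      exact hz this
  -- CM_n
  · intro X B hX hsm h
    by_cases hXu : X = univ
    · subst hXu
      have hpt : ∀ i : ℕ, ∃ x : Fin n, i < n - 1 → univ \ B i ⊆ {x} := by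
        intro i
        by_cases hi : i < n - 1
        · rcases hsm i hi with h1 | ⟨-, y, hy⟩
          · exact ⟨⟨0, by omega⟩, fun _ => by rw [h1]; exact empty_subset _⟩
          · exact ⟨y, fun _ => le_of_eq hy⟩
        · exact ⟨⟨0, by omega⟩, fun h' => absurd h' hi⟩
      choose f hf using hpt
      have hmem : ∀ i < n - 1, ∀ z : Fin n, z ∉ ({f i} : Set (Fin n)) → z ∈ B i := by
        intro i hi z hz
        by_contra hzB
        exact hz (hf i hi ⟨mem_univ z, hzB⟩)
      have hcard : ((Finset.range (n - 1)).image f).card < n :=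
        lt_of_le_of_lt (le_trans Finset.card_image_le (le_of_eq (Finset.card_range _)))
          (by omega)
      obtain ⟨z, hz⟩ := aux_exists_not_mem ((Finset.range (n - 1)).image f) hcard
      have hzB : ∀ i < n - 1, z ∈ B i := by
        intro i hi
        apply hmem i hi
        intro hzf
        exact hz (Finset.mem_image.mpr ⟨i, Finset.mem_range.mpr hi, hzf.symm⟩)
      have hzY : z ∈ (univ ∩ ⋂ i ∈ Finset.range (n - 2), B i) ∩ B (n - 2) := by
        refine ⟨⟨mem_univ z, ?_⟩, hzB (n - 2) (by omega)⟩
        exact mem_iInter₂.mpr fun i hi => hzB i (by have := Finset.mem_range.mp hi; omega)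
      rcases h with h0 | ⟨hYu, w, hw⟩
      · rw [h0] at hzY
        exact hzY
      · have hB2 : B (n - 2) = {w} := by
          have hall : ∀ a : Fin n, a ∈ (univ ∩ ⋂ i ∈ Finset.range (n - 2), B i : Set (Fin n)) := by
            rw [hYu]; exact fun a => mem_univ a
          apply subset_antisymm
          · intro a ha
            exact hw ▸ ⟨hall a, ha⟩
          · intro a ha
            have : a ∈ (univ ∩ ⋂ i ∈ Finset.range (n - 2), B i) ∩ B (n - 2) := hw ▸ ha
            exact this.2
        obtain ⟨z', hzw, hzf⟩ := aux_exists_ne_ne hn w (f (n - 2))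
        have : z' ∈ B (n - 2) := hmem (n - 2) (by omega) z' hzf
        rw [hB2] at this
        exact hzw this
    · have hsub : ∀ i < n - 1, X ⊆ B i := by
        intro i hi
        rcases hsm i hi with h1 | ⟨h2, -⟩
        · exact diff_eq_empty.mp h1
        · exact absurd h2 hXu
      have hY : X ∩ ⋂ i ∈ Finset.range (n - 2), B i = X := by
        apply subset_antisymm inter_subset_left
        refine subset_inter subset_rfl ?_
        intro a ha
        exact mem_iInter₂.mpr fun i hi =>
          hsub i (by have := Finset.mem_range.mp hi; omega) ha
      rw [hY] at h
      have hYB : X ∩ B (n - 2) = X :=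
        inter_eq_left.mpr (hsub (n - 2) (by omega))
      rw [hYB] at h
      rcases h with h0 | ⟨hYu, -⟩
      · exact hX.ne_empty h0
      · exact hXu hYu
  -- ¬ I_n
  · intro h
    apply h univ ⟨⟨0, by omega⟩, mem_univ _⟩
      (fun i => if hi : i < n then ({⟨i, hi⟩} : Set (Fin n)) else ∅)
    · intro i hi
      exact Or.inr ⟨rfl, ⟨i, hi⟩, by simp [hi]⟩
    · apply eq_univ_iff_forall.mpr
      intro a
      refine mem_biUnion (Finset.mem_range.mpr a.isLt) ?_
      simp [a.isLt]
end

section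
/- Assuming all relevant sets are definable by formulas (e.g., a finite propositional language), the cautious monotony rule (CM_ω): α |∼ β and α |∼ β′ imply α ∧ β |∼ β′, is equivalent to the size condition (M⁺_ω)(4): A, B ∈ I(X) implies A \ B ∈ I(X \ B). -/
open Set

/-- Assuming all sets are definable by formulas, the cautious monotony rule
`(CM_ω)`: `α |∼ β, α |∼ β' ⇒ α ∧ β |∼ β'` (in set terms, with `X = M(α)`,
`B = M(β)`, `B' = M(β')`: `X \ B ∈ I(X)` and `X \ B' ∈ I(X)` imply
`(X ∩ B) \ B' ∈ I(X ∩ B)`) is equivalent to the size condition `(M⁺_ω)(4)`: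
`A, B ∈ I(X)` implies `A \ B ∈ I(X \ B)`. -/
theorem stmt8 {α : Type*} (I : Set α → Set (Set α))
    (hsub : ∀ X A : Set α, A ∈ I X → A ⊆ X) :
    (∀ X B B' : Set α, X \ B ∈ I X → X \ B' ∈ I X →
        (X ∩ B) \ B' ∈ I (X ∩ B))
    ↔
    (∀ X A B : Set α, A ∈ I X → B ∈ I X → A \ B ∈ I (X \ B)) := by
  constructor
  · intro h X A B hA hB
    have hA' := hsub X A hA
    have hB' := hsub X B hB
    have h1 : X \ (X \ B) ∈ I X := by
      have : X \ (X \ B) = B := by ext x; have := @hB' x; simp only [mem_diff, mem_inter_iff, not_and, not_not]; tauto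
      rw [this]; exact hB
    have h2 : X \ (X \ A) ∈ I X := by
      have : X \ (X \ A) = A := by ext x; have := @hA' x; simp only [mem_diff, mem_inter_iff, not_and, not_not]; tauto
      rw [this]; exact hA
    have key := h X (X \ B) (X \ A) h1 h2
    have e1 : X ∩ (X \ B) = X \ B := by ext x; simp only [mem_diff, mem_inter_iff, not_and, not_not]; tauto
    rw [e1] at key
    have e2 : (X \ B) \ (X \ A) = A \ B := by
      ext x; have := @hA' x; have := @hB' x; simp only [mem_diff, mem_inter_iff, not_and, not_not]; tauto
    rw [e2] at key; exact key
  · intro h X B B' h1 h2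
    have key := h X (X \ B') (X \ B) h2 h1
    have e1 : X \ (X \ B) = X ∩ B := by ext x; simp only [mem_diff, mem_inter_iff, not_and, not_not]; tauto
    have e2 : (X \ B') \ (X \ B) = (X ∩ B) \ B' := by ext x; simp only [mem_diff, mem_inter_iff, not_and, not_not]; tauto
    rw [e1, e2] at key; exact key
end

section
/- If a size system satisfies (I_ω) and (eMF), then (M⁺_ω)(2) holds: for A ⊆ X ⊆ Y, if X ∈ F(Y) and A ∈ I(Y), then A ∈ I(X). -/
open Set

/-- If a size system satisfies `(I_ω)` and `(eMF)`, then `(M⁺_ω)(2)` holds: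
for `A ⊆ X ⊆ Y`, if `X ∈ F(Y)` (i.e. `Y \ X ∈ I(Y)`) and `A ∈ I(Y)`,
then `A ∈ I(X)`. -/
theorem stmt11 {α : Type*} (I : Set α → Set (Set α))
    (hsub : ∀ X A : Set α, A ∈ I X → A ⊆ X)
    -- (I_ω)
    (hIw : ∀ X A B : Set α, A ∈ I X → B ∈ I X → A ∪ B ∈ I X)
    -- (eMF): X ⊆ Y, A ⊆ X, A ∈ F(Y) ⇒ A ∈ F(X)
    (heMF : ∀ X Y A : Set α, X ⊆ Y → A ⊆ X → Y \ A ∈ I Y → X \ A ∈ I X) :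
    ∀ A X Y : Set α, A ⊆ X → X ⊆ Y → Y \ X ∈ I Y → A ∈ I Y → A ∈ I X := by
  intro A X Y hAX hXY hYX hA
  have h1 : (Y \ X) ∪ A ∈ I Y := hIw Y _ _ hYX hA
  have h2 : Y \ (X \ A) = (Y \ X) ∪ A := by
    ext x
    simp only [mem_diff, mem_union, not_and, not_not]
    constructor
    · rintro ⟨hxY, h⟩
      by_cases hx : x ∈ X
      · exact Or.inr (h hx)
      · exact Or.inl ⟨hxY, hx⟩
    · rintro (⟨hxY, hxX⟩ | hxA)
      · exact ⟨hxY, fun h => absurd h hxX⟩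
      · exact ⟨hXY (hAX hxA), fun _ => hxA⟩
  have h3 : X \ (X \ A) ∈ I X := heMF X Y (X \ A) hXY diff_subset (h2 ▸ h1)
  rwa [diff_diff_cancel_left hAX] at h3
end

section
/- If a size system satisfies (I_ω) and (eMI), then (M⁺_ω)(3), filter transitivity, holds: for A ⊆ X ⊆ Y, if A ∈ F(X) and X ∈ F(Y), then A ∈ F(Y). -/
open Set

/-- If a size system satisfies `(I_ω)` and `(eMI)`, then `(M⁺_ω)(3)`, filter
transitivity, holds: for `A ⊆ X ⊆ Y`, if `A ∈ F(X)` and `X ∈ F(Y)`, then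
`A ∈ F(Y)`; i.e. `X \ A ∈ I(X)` and `Y \ X ∈ I(Y)` imply `Y \ A ∈ I(Y)`. -/
theorem stmt12 {α : Type*} (I : Set α → Set (Set α))
    (hsub : ∀ X A : Set α, A ∈ I X → A ⊆ X)
    -- (I_ω)
    (hIw : ∀ X A B : Set α, A ∈ I X → B ∈ I X → A ∪ B ∈ I X)
    -- (eMI)
    (heMI : ∀ X Y : Set α, X ⊆ Y → I X ⊆ I Y) :
    ∀ A X Y : Set α, A ⊆ X → X ⊆ Y → X \ A ∈ I X → Y \ X ∈ I Y →
      Y \ A ∈ I Y := by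
  intro A X Y hAX hXY h1 h2
  have h1' : X \ A ∈ I Y := heMI X Y hXY h1
  have : (X \ A) ∪ (Y \ X) ∈ I Y := hIw Y _ _ h1' h2
  have heq : Y \ A = (X \ A) ∪ (Y \ X) := by
    ext x
    simp only [mem_diff, mem_union]
    constructor
    · rintro ⟨hy, ha⟩
      by_cases hx : x ∈ X
      · exact Or.inl ⟨hx, ha⟩
      · exact Or.inr ⟨hy, hx⟩
    · rintro (⟨hx, ha⟩ | ⟨hy, hx⟩)
      · exact ⟨hXY hx, ha⟩
      · exact ⟨hy, fun h => hx (hAX h)⟩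
  rwa [heq]
end

section
/- If a size system satisfies (I_ω) and (eMF), then (M⁺_ω)(4) holds: A, B ∈ I(X) implies A \ B ∈ I(X \ B). -/
open Set

/-- If a size system satisfies `(I_ω)` and `(eMF)`, then `(M⁺_ω)(4)` holds:
`A, B ∈ I(X)` implies `A \ B ∈ I(X \ B)`. -/
theorem stmt13 {α : Type*} (I : Set α → Set (Set α))
    (hsub : ∀ X A : Set α, A ∈ I X → A ⊆ X)
    -- (I_ω)
    (hIw : ∀ X A B : Set α, A ∈ I X → B ∈ I X → A ∪ B ∈ I X)
    -- (eMF): X ⊆ Y, A ⊆ X, A ∈ F(Y) ⇒ A ∈ F(X)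
    (heMF : ∀ X Y A : Set α, X ⊆ Y → A ⊆ X → Y \ A ∈ I Y → X \ A ∈ I X) :
    ∀ X A B : Set α, A ∈ I X → B ∈ I X → A \ B ∈ I (X \ B) := by
  intro X A B hA hB
  have hAX := hsub X A hA
  have hBX := hsub X B hB
  have hU : A ∪ B ∈ I X := hIw X A B hA hB
  have h1 : X \ (X \ (A ∪ B)) ∈ I X := by
    rwa [diff_diff_cancel_left (union_subset hAX hBX)]
  have h2 : (X \ B) \ (X \ (A ∪ B)) ∈ I (X \ B) :=
    heMF (X \ B) X (X \ (A ∪ B)) (diff_subset) (fun x hx => ⟨hx.1, fun h => hx.2 (Or.inr h)⟩) h1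
  have heq : (X \ B) \ (X \ (A ∪ B)) = A \ B := by
    ext x
    constructor
    · rintro ⟨⟨hxX, hxB⟩, h⟩
      rcases not_and_or.mp h with h' | h'
      · exact absurd hxX h'
      · rcases not_not.mp h' with h'' | h''
        · exact ⟨h'', hxB⟩
        · exact absurd h'' hxB
    · rintro ⟨hxA, hxB⟩
      exact ⟨⟨hAX hxA, hxB⟩, fun h => h.2 (Or.inl hxA)⟩
  rwa [heq] at h2
end

section
/- There exists a coherent system of sizes on U = {a,b,c} satisfying (Opt), (iM), (eMI), (eMF) in which version (3) of (M⁺_ω) (filter transitivity: A ∈ F(X), X ∈ F(Y) ⇒ A ∈ F(Y)) holds, but versions (1), (2), and (4) of (M⁺_ω) all fail. (Witness: F(U) = {{a,c},{b,c},U}, F({a,b}) = {{a},{a,b}}, F(Z) = {Z} otherwise.) Hence version (3) does not imply any of versions (1), (2), (4). -/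
open Set

def II : Set (Fin 3) → Set (Set (Fin 3)) :=
  fun X => {A | A = ∅ ∨ (X = univ ∧ (A = {0} ∨ A = {1})) ∨ (X = {0,1} ∧ A = {1})}

lemma forall_fin3 (p : Fin 3 → Prop) : (∀ x : Fin 3, p x) ↔ p 0 ∧ p 1 ∧ p 2 := by
  constructor
  · intro h; exact ⟨h 0, h 1, h 2⟩
  · rintro ⟨h0, h1, h2⟩ x; fin_cases x <;> assumption

lemma f01 : ((0:Fin 3) = 1) ↔ False := by simp [Fin.ext_iff]
lemma f02 : ((0:Fin 3) = 2) ↔ False := by simp [Fin.ext_iff]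
lemma f10 : ((1:Fin 3) = 0) ↔ False := by simp [Fin.ext_iff]
lemma f12 : ((1:Fin 3) = 2) ↔ False := by simp [Fin.ext_iff]
lemma f20 : ((2:Fin 3) = 0) ↔ False := by simp [Fin.ext_iff]
lemma f21 : ((2:Fin 3) = 1) ↔ False := by simp [Fin.ext_iff]

lemma setcases (S : Set (Fin 3)) :
    S = ∅ ∨ S = {0} ∨ S = {1} ∨ S = {2} ∨ S = {0,1} ∨ S = {0,2} ∨ S = {1,2} ∨ S = univ := by
  have hcases : ∀ T : Set (Fin 3), ((0:Fin 3) ∈ S ↔ (0:Fin 3) ∈ T) →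
      ((1:Fin 3) ∈ S ↔ (1:Fin 3) ∈ T) → ((2:Fin 3) ∈ S ↔ (2:Fin 3) ∈ T) → S = T := by
    intro T h0 h1 h2; ext x; fin_cases x <;> assumption
  by_cases h0 : (0:Fin 3) ∈ S <;> by_cases h1 : (1:Fin 3) ∈ S <;> by_cases h2 : (2:Fin 3) ∈ S
  · exact .inr <| .inr <| .inr <| .inr <| .inr <| .inr <| .inr <| hcases _ (by simp_all) (by simp_all) (by simp_all)
  · exact .inr <| .inr <| .inr <| .inr <| .inl <| hcases _ (by simp_all) (by simp_all) (by simp_all)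
  · exact .inr <| .inr <| .inr <| .inr <| .inr <| .inl <| hcases _ (by simp_all) (by simp_all) (by simp_all)
  · exact .inr <| .inl <| hcases _ (by simp_all) (by simp_all) (by simp_all)
  · exact .inr <| .inr <| .inr <| .inr <| .inr <| .inr <| .inl <| hcases _ (by simp_all) (by simp_all) (by simp_all)
  · exact .inr <| .inr <| .inl <| hcases _ (by simp_all) (by simp_all) (by simp_all)
  · exact .inr <| .inr <| .inr <| .inl <| hcases _ (by simp_all) (by simp_all) (by simp_all)
  · exact .inl <| hcases _ (by simp_all) (by simp_all) (by simp_all)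

set_option maxHeartbeats 4000000 in
lemma II_eMF : ∀ X Y A : Set (Fin 3), X.Nonempty → Y.Nonempty → X ⊆ Y → A ⊆ X →
    Y \ A ∈ II Y → X \ A ∈ II X := by
  intro X Y A _ _ hXY hAX h
  rcases setcases X with hX|hX|hX|hX|hX|hX|hX|hX <;>
  rcases setcases Y with hY|hY|hY|hY|hY|hY|hY|hY <;>
  rcases setcases A with hA|hA|hA|hA|hA|hA|hA|hA <;>
  subst hX hY hA <;>
  revert hXY hAX h <;>
  simp only [II, mem_setOf_eq, Set.ext_iff, Set.subset_def, forall_fin3,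
    mem_insert_iff, mem_singleton_iff, mem_empty_iff_false, mem_univ, mem_diff,
    f01, f02, f10, f12, f20, f21, iff_true, iff_false, true_and, and_true, false_and,
    and_false, true_or, or_true, false_or, or_false, not_true, not_false_iff,
    true_implies, false_implies, implies_true, iff_self, not_not, imp_self, and_self,
    or_self, true_iff, false_iff, not_false_eq_true] <;>
  tauto

set_option maxHeartbeats 4000000 in
lemma II_M3 : ∀ A X Y : Set (Fin 3), X.Nonempty → Y.Nonempty → A ⊆ X → X ⊆ Y →
    X \ A ∈ II X → Y \ X ∈ II Y → Y \ A ∈ II Y := by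
  intro A X Y _ _ hAX hXY h1 h2
  rcases setcases X with hX|hX|hX|hX|hX|hX|hX|hX <;>
  rcases setcases Y with hY|hY|hY|hY|hY|hY|hY|hY <;>
  rcases setcases A with hA|hA|hA|hA|hA|hA|hA|hA <;>
  subst hX hY hA <;>
  revert hXY hAX h1 h2 <;>
  simp only [II, mem_setOf_eq, Set.ext_iff, Set.subset_def, forall_fin3,
    mem_insert_iff, mem_singleton_iff, mem_empty_iff_false, mem_univ, mem_diff,
    f01, f02, f10, f12, f20, f21, iff_true, iff_false, true_and, and_true, false_and,
    and_false, true_or, or_true, false_or, or_false, not_true, not_false_iff,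
    true_implies, false_implies, implies_true, iff_self, not_not, imp_self, and_self,
    or_self, true_iff, false_iff, not_false_eq_true] <;>
  tauto

/-- There is a coherent system of sizes on `U = {a,b,c}` (modelled as `Fin 3`,
domain the nonempty subsets) satisfying `(Opt)`, `(iM)`, `(eMI)`, `(eMF)`, in
which version (3) of `(M⁺_ω)` (filter transitivity) holds, but versions (1),
(2) and (4) all fail.  Hence version (3) implies none of versions (1), (2), (4).
(Witness: `F(U) = {{a,c},{b,c},U}`, `F({a,b}) = {{a},{a,b}}`, `F(Z) = {Z}`
otherwise.) -/
theorem stmt14 :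
    ∃ I : Set (Fin 3) → Set (Set (Fin 3)),
      (∀ X A : Set (Fin 3), X.Nonempty → A ∈ I X → A ⊆ X) ∧
      -- (Opt)
      (∀ X : Set (Fin 3), X.Nonempty → (∅ : Set (Fin 3)) ∈ I X) ∧
      -- (iM)
      (∀ X A B : Set (Fin 3), X.Nonempty → A ⊆ B → B ∈ I X → A ∈ I X) ∧
      -- (eMI)
      (∀ X Y : Set (Fin 3), X.Nonempty → Y.Nonempty → X ⊆ Y → I X ⊆ I Y) ∧
      -- (eMF)
      (∀ X Y A : Set (Fin 3), X.Nonempty → Y.Nonempty → X ⊆ Y → A ⊆ X →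
          Y \ A ∈ I Y → X \ A ∈ I X) ∧
      -- (M⁺_ω)(3) holds: A ∈ F(X), X ∈ F(Y) ⇒ A ∈ F(Y)
      (∀ A X Y : Set (Fin 3), X.Nonempty → Y.Nonempty → A ⊆ X → X ⊆ Y →
          X \ A ∈ I X → Y \ X ∈ I Y → Y \ A ∈ I Y) ∧
      -- (M⁺_ω)(1) fails: A ∈ F(X), A ∈ I(Y) ⇒ X ∈ I(Y)
      ¬ (∀ A X Y : Set (Fin 3), X.Nonempty → Y.Nonempty → A ⊆ X → X ⊆ Y →
          X \ A ∈ I X → A ∈ I Y → X ∈ I Y) ∧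
      -- (M⁺_ω)(2) fails: X ∈ F(Y), A ∈ I(Y) ⇒ A ∈ I(X)
      ¬ (∀ A X Y : Set (Fin 3), X.Nonempty → Y.Nonempty → A ⊆ X → X ⊆ Y →
          Y \ X ∈ I Y → A ∈ I Y → A ∈ I X) ∧
      -- (M⁺_ω)(4) fails: A, B ∈ I(X) ⇒ A \ B ∈ I(X \ B)
      ¬ (∀ X A B : Set (Fin 3), X.Nonempty → A ∈ I X → B ∈ I X →
          A \ B ∈ I (X \ B)) := by
  refine ⟨II, ?_, ?_, ?_, ?_, II_eMF, II_M3, ?_, ?_, ?_⟩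
  · -- subsets
    rintro X A _ (h | ⟨hX, h | h⟩ | ⟨hX, h⟩) <;> subst h
    · exact empty_subset _
    · subst hX; exact subset_univ _
    · subst hX; exact subset_univ _
    · subst hX; intro x hx; simp only [mem_singleton_iff] at hx; simp [hx]
  · -- (Opt)
    intro X _; exact Or.inl rfl
  · -- (iM)
    rintro X A B _ hAB (h | ⟨hX, h | h⟩ | ⟨hX, h⟩) <;> subst h
    · exact Or.inl (subset_empty_iff.mp hAB)
    · rcases subset_singleton_iff_eq.mp hAB with h' | h'
      · exact Or.inl h'
      · exact Or.inr (Or.inl ⟨hX, Or.inl h'⟩)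
    · rcases subset_singleton_iff_eq.mp hAB with h' | h'
      · exact Or.inl h'
      · exact Or.inr (Or.inl ⟨hX, Or.inr h'⟩)
    · rcases subset_singleton_iff_eq.mp hAB with h' | h'
      · exact Or.inl h'
      · exact Or.inr (Or.inr ⟨hX, h'⟩)
  · -- (eMI)
    rintro X Y _ _ hXY A (h | ⟨hX, h⟩ | ⟨hX, h⟩)
    · exact Or.inl h
    · subst hX; exact Or.inr (Or.inl ⟨univ_subset_iff.mp hXY, h⟩)
    · subst hX
      have h0 : (0:Fin 3) ∈ Y := hXY (by simp)
      have h1 : (1:Fin 3) ∈ Y := hXY (by simp)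
      by_cases h2 : (2:Fin 3) ∈ Y
      · have hY : Y = univ := by ext x; fin_cases x <;> simp_all
        exact Or.inr (Or.inl ⟨hY, Or.inr h⟩)
      · have hY : Y = {0,1} := by ext x; fin_cases x <;> simp_all
        exact Or.inr (Or.inr ⟨hY, h⟩)
  · -- (1) fails
    intro hcon
    have h := hcon {0} {0,1} univ ⟨0, by simp⟩ ⟨0, trivial⟩
      (by intro x hx; simp only [mem_singleton_iff] at hx; simp [hx])
      (subset_univ _)
      (Or.inr (Or.inr ⟨rfl, by
        ext x; fin_cases x <;> simp [f01, f02, f10, f12, f20, f21]⟩))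
      (Or.inr (Or.inl ⟨rfl, Or.inl rfl⟩))
    revert h
    simp only [II, mem_setOf_eq, Set.ext_iff, forall_fin3,
      mem_insert_iff, mem_singleton_iff, mem_empty_iff_false, mem_univ,
      f01, f02, f10, f12, f20, f21, iff_true, iff_false, true_and, and_true, false_and,
      and_false, true_or, or_true, false_or, or_false, not_true, not_false_iff,
      iff_self, true_iff, false_iff, or_self, and_self, not_false_eq_true]
    tauto
  · -- (2) fails
    intro hcon
    have h := hcon {1} {1,2} univ ⟨1, by simp⟩ ⟨0, trivial⟩
      (by intro x hx; simp only [mem_singleton_iff] at hx; simp [hx])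
      (subset_univ _)
      (Or.inr (Or.inl ⟨rfl, Or.inl (by
        ext x; fin_cases x <;> simp [f01, f02, f10, f12, f20, f21])⟩))
      (Or.inr (Or.inl ⟨rfl, Or.inr rfl⟩))
    revert h
    simp only [II, mem_setOf_eq, Set.ext_iff, forall_fin3,
      mem_insert_iff, mem_singleton_iff, mem_empty_iff_false, mem_univ,
      f01, f02, f10, f12, f20, f21, iff_true, iff_false, true_and, and_true, false_and,
      and_false, true_or, or_true, false_or, or_false, not_true, not_false_iff,
      iff_self, true_iff, false_iff, or_self, and_self, not_false_eq_true]
    tauto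
  · -- (4) fails
    intro hcon
    have h := hcon univ {0} {1} ⟨0, trivial⟩
      (Or.inr (Or.inl ⟨rfl, Or.inl rfl⟩))
      (Or.inr (Or.inl ⟨rfl, Or.inr rfl⟩))
    have hd : ({0} : Set (Fin 3)) \ {1} = {0} := by
      ext x; fin_cases x <;> simp [f01, f02, f10, f12, f20, f21]
    rw [hd] at h
    revert h
    simp only [II, mem_setOf_eq, Set.ext_iff, forall_fin3, mem_diff,
      mem_insert_iff, mem_singleton_iff, mem_empty_iff_false, mem_univ,
      f01, f02, f10, f12, f20, f21, iff_true, iff_false, true_and, and_true, false_and,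
      and_false, true_or, or_true, false_or, or_false, not_true, not_false_iff,
      iff_self, true_iff, false_iff, or_self, and_self, not_false_eq_true, not_not]
    tauto
end

section
/- Assume the domain is closed under set difference and (iM) holds. Then the three versions of the robustness condition (M++) are pairwise equivalent: (1) A ∈ I(X), B ∉ F(X) ⇒ A\B ∈ I(X\B); (2) A ∈ F(X), B ∉ F(X) ⇒ A\B ∈ F(X\B); (3) for A ⊆ X ⊆ Y: A ∈ M⁺(X) and X ∈ M⁺(Y) imply A ∈ M⁺(Y), where M⁺(Z) = P(Z) \ I(Z). -/
open Set

/-- Assuming the domain is closed under set difference (here: the full power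
set) and `(iM)` holds, the three versions of the robustness condition `(M++)`
are pairwise equivalent:
(1) `A ∈ I(X)`, `B ∉ F(X)` ⇒ `A \ B ∈ I(X \ B)`;
(2) `A ∈ F(X)`, `B ∉ F(X)` ⇒ `A \ B ∈ F(X \ B)`;
(3) for `A ⊆ X ⊆ Y`: `A ∈ M⁺(X)` and `X ∈ M⁺(Y)` imply `A ∈ M⁺(Y)`,
where `M⁺(Z)` is the set of subsets of `Z` not in `I(Z)`. -/
theorem stmt15 {α : Type*} (I : Set α → Set (Set α))
    (hsub : ∀ X A : Set α, A ∈ I X → A ⊆ X)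
    -- (iM)
    (hiM : ∀ X A B : Set α, A ⊆ B → B ∈ I X → A ∈ I X) :
    ((∀ X A B : Set α, A ⊆ X → B ⊆ X → A ∈ I X → X \ B ∉ I X →
        A \ B ∈ I (X \ B))
      ↔
      (∀ X A B : Set α, A ⊆ X → B ⊆ X → X \ A ∈ I X → X \ B ∉ I X →
        (X \ B) \ (A \ B) ∈ I (X \ B)))
    ∧
    ((∀ X A B : Set α, A ⊆ X → B ⊆ X → A ∈ I X → X \ B ∉ I X →
        A \ B ∈ I (X \ B))
      ↔
      (∀ A X Y : Set α, A ⊆ X → X ⊆ Y → A ∉ I X → X ∉ I Y → A ∉ I Y)) := by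
  constructor
  · constructor
    · intro h1 X A B hA hB hXA hXB
      have key : (X \ B) \ (A \ B) = (X \ A) \ B := by
        ext x; simp only [mem_diff]; tauto
      rw [key]
      exact h1 X (X \ A) B diff_subset hB hXA hXB
    · intro h2 X A B hA hB hAI hXB
      have hXA : X \ (X \ A) ∈ I X := by
        rw [diff_diff_cancel_left hA]; exact hAI
      have := h2 X (X \ A) B diff_subset hB hXA hXB
      have key : (X \ B) \ ((X \ A) \ B) = A \ B := by
        ext x; simp only [mem_diff]
        constructor
        · rintro ⟨⟨hx, hb⟩, hn⟩
          refine ⟨by_contra fun ha => hn ⟨⟨hx, ha⟩, hb⟩, hb⟩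
        · rintro ⟨ha, hb⟩
          exact ⟨⟨hA ha, hb⟩, fun ⟨⟨_, hna⟩, _⟩ => hna ha⟩
      rwa [key] at this
  · constructor
    · intro h1 A X Y hAX hXY hAnX hXnY hAY
      apply hAnX
      have hYX : Y \ (Y \ X) = X := diff_diff_cancel_left hXY
      have hB : Y \ X ⊆ Y := diff_subset
      have := h1 Y A (Y \ X) (hAX.trans hXY) hB hAY (by rwa [hYX])
      rw [hYX] at this
      have hAd : A \ (Y \ X) = A := by
        ext x; simp only [mem_diff]
        exact ⟨fun ⟨ha, _⟩ => ha, fun ha => ⟨ha, fun ⟨_, hn⟩ => hn (hAX ha)⟩⟩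
      rwa [hAd] at this
    · intro h3 X A B hA hB hAI hXB
      by_contra hn
      have hsub1 : A \ B ⊆ X \ B := diff_subset_diff_left hA
      have := h3 (A \ B) (X \ B) X hsub1 diff_subset hn hXB
      exact this (hiM X (A \ B) A diff_subset hAI)
end

section
/- Assuming all sets are definable by formulas, the Rational Monotony rule (RatM): φ |∼ ψ and φ |̸∼ ¬ψ′ imply φ ∧ ψ′ |∼ ψ, is equivalent to condition (M++)(1): A ∈ I(X), B ∉ F(X) ⇒ A \ B ∈ I(X \ B). -/
open Set

/-- Assuming all sets are definable by formulas, Rational Monotony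
`(RatM)`: `φ |∼ ψ`, `φ |̸∼ ¬ψ'` imply `φ ∧ ψ' |∼ ψ` (in set terms, with
`X = M(φ)`, `P = M(ψ)`, `P' = M(ψ')`: `X \ P ∈ I(X)` and `X ∩ P' ∉ I(X)` imply
`(X ∩ P') \ P ∈ I(X ∩ P')`) is equivalent to `(M++)(1)`:
`A ∈ I(X)`, `B ∉ F(X)` ⇒ `A \ B ∈ I(X \ B)`. -/
theorem stmt16 {α : Type*} (I : Set α → Set (Set α))
    (hsub : ∀ X A : Set α, A ∈ I X → A ⊆ X) :
    (∀ X P P' : Set α, X \ P ∈ I X → X ∩ P' ∉ I X →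
        (X ∩ P') \ P ∈ I (X ∩ P'))
    ↔
    (∀ X A B : Set α, A ⊆ X → B ⊆ X → A ∈ I X → X \ B ∉ I X →
        A \ B ∈ I (X \ B)) := by
  constructor
  · intro h X A B hAX hBX hA hB
    have h1 : X \ (X \ A) = A := Set.diff_diff_cancel_left hAX
    have h2 : X ∩ (X \ B) = X \ B := Set.inter_eq_self_of_subset_right Set.diff_subset
    have := h X (X \ A) (X \ B) (by rw [h1]; exact hA) (by rw [h2]; exact hB)
    rw [h2] at this
    have h3 : (X \ B) \ (X \ A) = A \ B := by
      ext x; simp only [Set.mem_diff]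
      constructor
      · rintro ⟨⟨hx, hb⟩, hna⟩
        push_neg at hna
        exact ⟨hna hx, hb⟩
      · rintro ⟨ha, hb⟩
        exact ⟨⟨hAX ha, hb⟩, fun h' => h'.2 ha⟩
    rwa [h3] at this
  · intro h X P P' hP hP'
    have h2 : X \ (X \ P') = X ∩ P' := by
      ext x; simp only [Set.mem_diff, Set.mem_inter_iff]; tauto
    have := h X (X \ P) (X \ P') Set.diff_subset Set.diff_subset hP (by rw [h2]; exact hP')
    rw [h2] at this
    have h3 : (X \ P) \ (X \ P') = (X ∩ P') \ P := by
      ext x; simp only [Set.mem_diff, Set.mem_inter_iff]; tauto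
    rwa [h3] at this
end

section
/- Let f(X) denote the smallest element of F(X) (so F(X) = {X′ : f(X) ⊆ X′ ⊆ X}, a principal filter). If the system satisfies (eMI) and (I_ω), then (μPR) holds: X ⊆ Y implies f(Y) ∩ X ⊆ f(X). Conversely, if (μPR) holds for f and F(X) is defined as the principal filter generated by f(X) on the full power set, then (eMI) and (I_ω) hold. -/
open Set

/-- Let `f(X)` be the smallest element of `F(X)` (so `F(X)` is the principal
filter `{X' : f(X) ⊆ X' ⊆ X}`).  If the system satisfies `(eMI)` and `(I_ω)`,
then `(μPR)` holds: `X ⊆ Y ⇒ f(Y) ∩ X ⊆ f(X)`.  Conversely, if `(μPR)` holds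
for a function `g` and `F(X)` is defined as the principal filter generated by
`g(X)` (so that `A ∈ I(X) ↔ A ⊆ X ∧ A ∩ g(X) = ∅`) on the full power set,
then `(eMI)` and `(I_ω)` hold for the induced system. -/
theorem stmt17 {α : Type*} (I : Set α → Set (Set α)) (f : Set α → Set α)
    (hsub : ∀ X A : Set α, A ∈ I X → A ⊆ X)
    -- f X is the smallest element of F(X)
    (hf : ∀ X : Set α, (f X ⊆ X ∧ X \ f X ∈ I X) ∧
      ∀ A : Set α, A ⊆ X → X \ A ∈ I X → f X ⊆ A) :
    -- (eMI) and (I_ω) imply (μPR)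
    (((∀ X Y : Set α, X ⊆ Y → I X ⊆ I Y) ∧
      (∀ X A B : Set α, A ∈ I X → B ∈ I X → A ∪ B ∈ I X)) →
      ∀ X Y : Set α, X ⊆ Y → f Y ∩ X ⊆ f X)
    ∧
    -- conversely, (μPR) for g implies (eMI) and (I_ω) for the induced system
    (∀ g : Set α → Set α, (∀ X, g X ⊆ X) →
      (∀ X Y : Set α, X ⊆ Y → g Y ∩ X ⊆ g X) →
      ((∀ X Y A : Set α, X ⊆ Y → (A ⊆ X ∧ A ∩ g X = ∅) →
          (A ⊆ Y ∧ A ∩ g Y = ∅)) ∧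
       (∀ X A B : Set α, (A ⊆ X ∧ A ∩ g X = ∅) → (B ⊆ X ∧ B ∩ g X = ∅) →
          (A ∪ B ⊆ X ∧ (A ∪ B) ∩ g X = ∅)))) := by
  constructor
  · rintro ⟨heMI, hIω⟩ X Y hXY x ⟨hxfY, hxX⟩
    by_contra hxfX
    have h1 : X \ f X ∈ I Y := heMI X Y hXY (hf X).1.2
    have h2 : (X \ f X) ∪ (Y \ f Y) ∈ I Y := hIω Y _ _ h1 (hf Y).1.2
    have hA : Y \ ((X \ f X) ∪ (Y \ f Y)) ⊆ Y := diff_subset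
    have hYA : Y \ (Y \ ((X \ f X) ∪ (Y \ f Y))) ∈ I Y := by
      have : Y \ (Y \ ((X \ f X) ∪ (Y \ f Y))) = (X \ f X) ∪ (Y \ f Y) := by
        apply diff_diff_cancel_left
        exact hsub Y _ h2
      rw [this]; exact h2
    have := (hf Y).2 _ hA hYA hxfY
    exact this.2 (Or.inl ⟨hxX, hxfX⟩)
  · intro g hg hμPR
    constructor
    · rintro X Y A hXY ⟨hAX, hAg⟩
      refine ⟨hAX.trans hXY, ?_⟩
      ext x
      simp only [mem_inter_iff, mem_empty_iff_false, iff_false, not_and]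
      intro hxA hxgY
      have : x ∈ g X := hμPR X Y hXY ⟨hxgY, hAX hxA⟩
      have hmem : x ∈ A ∩ g X := ⟨hxA, this⟩
      rw [hAg] at hmem
      exact hmem
    · rintro X A B ⟨hAX, hAg⟩ ⟨hBX, hBg⟩
      refine ⟨union_subset hAX hBX, ?_⟩
      rw [union_inter_distrib_right, hAg, hBg, union_empty]
end

section
/- Let f(X) be the smallest element of F(X). If the system satisfies (M++) (version: A ∈ I(Y), B ∉ F(Y) ⇒ A\B ∈ I(Y\B)), then (μRatM) holds: X ⊆ Y and X ∩ f(Y) ≠ ∅ imply f(X) ⊆ f(Y) ∩ X. Conversely, if (μRatM) holds for f and F(X) is the principal filter generated by f(X) on the full power set, then (M++) holds. -/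
open Set

/-- Let `f(X)` be the smallest element of `F(X)`.  If the system satisfies
`(M++)` (`A ∈ I(Y)`, `B ∉ F(Y)` ⇒ `A \ B ∈ I(Y \ B)`), then `(μRatM)` holds:
`X ⊆ Y` and `X ∩ f(Y) ≠ ∅` imply `f(X) ⊆ f(Y) ∩ X`.  Conversely, if `(μRatM)`
holds for a function `g` and `F(X)` is the principal filter generated by
`g(X)` (so `A ∈ I(X) ↔ A ⊆ X ∧ A ∩ g(X) = ∅`) on the full power set, then
`(M++)` holds for the induced system. -/
theorem stmt18 {α : Type*} (I : Set α → Set (Set α)) (f : Set α → Set α)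
    (hsub : ∀ X A : Set α, A ∈ I X → A ⊆ X)
    -- (iM)
    (hiM : ∀ X A B : Set α, A ⊆ B → B ∈ I X → A ∈ I X)
    -- f X is the smallest element of F(X)
    (hf : ∀ X : Set α, (f X ⊆ X ∧ X \ f X ∈ I X) ∧
      ∀ A : Set α, A ⊆ X → X \ A ∈ I X → f X ⊆ A) :
    -- (M++) implies (μRatM)
    ((∀ Y A B : Set α, A ⊆ Y → B ⊆ Y → A ∈ I Y → Y \ B ∉ I Y →
        A \ B ∈ I (Y \ B)) →
      ∀ X Y : Set α, X ⊆ Y → (X ∩ f Y).Nonempty → f X ⊆ f Y ∩ X)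
    ∧
    -- conversely, (μRatM) for g implies (M++) for the induced system
    (∀ g : Set α → Set α, (∀ X, g X ⊆ X) →
      (∀ X Y : Set α, X ⊆ Y → (X ∩ g Y).Nonempty → g X ⊆ g Y ∩ X) →
      ∀ Y A B : Set α, A ⊆ Y → B ⊆ Y → A ∩ g Y = ∅ →
        ((Y \ B) ∩ g Y).Nonempty →
        (A \ B ⊆ Y \ B ∧ (A \ B) ∩ g (Y \ B) = ∅)) := by
  constructor
  · intro hMpp X Y hXY hne
    have hcancel : Y \ (Y \ X) = X := Set.diff_diff_cancel_left hXY
    have hXnot : X ∉ I Y := by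
      intro hX
      have h1 : f Y ⊆ Y \ X := (hf Y).2 (Y \ X) (diff_subset) (by
        refine hiM Y _ X ?_ hX
        rw [hcancel])
      obtain ⟨x, hxX, hxf⟩ := hne
      exact (h1 hxf).2 hxX
    have h2 := hMpp Y (Y \ f Y) (Y \ X) diff_subset diff_subset (hf Y).1.2
      (by rwa [hcancel])
    rw [hcancel] at h2
    have heq : (Y \ f Y) \ (Y \ X) = X \ f Y := by
      ext x
      constructor
      · rintro ⟨⟨hy, hnf⟩, hnd⟩
        exact ⟨by by_contra h; exact hnd ⟨hy, h⟩, hnf⟩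
      · rintro ⟨hx, hnf⟩
        exact ⟨⟨hXY hx, hnf⟩, fun h => h.2 hx⟩
    rw [heq] at h2
    have := (hf X).2 (f Y ∩ X) inter_subset_right (by
      refine hiM X _ (X \ f Y) ?_ h2
      intro x hx
      exact ⟨hx.1, fun h => hx.2 ⟨h, hx.1⟩⟩)
    exact this
  · intro g hg hrat Y A B hA hB hAg hne
    have hmu := hrat (Y \ B) Y diff_subset hne
    refine ⟨fun x hx => ⟨hA hx.1, hx.2⟩, ?_⟩
    ext x
    simp only [mem_inter_iff, mem_diff, mem_empty_iff_false, iff_false]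
    rintro ⟨⟨hxA, _⟩, hxg⟩
    have := hmu hxg
    exact absurd hAg (by intro h; exact (h ▸ (⟨hxA, this.1⟩ : x ∈ A ∩ g Y) : x ∈ (∅:Set α)).elim)
end

section
/- Let f(X) be the smallest element of F(X). If the system satisfies (iM), (eMI), (I_ω), and (eMF), then (μ⊆⊇) holds: f(X) ⊆ Y and f(Y) ⊆ X imply f(X) = f(Y). Moreover, the converse fails: there is a system (on U = {a,b,c} with F({a,b}) = {{a,b},{a}} and F(Z) = {Z} otherwise) where (μ⊆⊇) holds for the induced f, but (eMI) fails. -/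
open Set

/-- Let `f(X)` be the smallest element of `F(X)`.  If the system satisfies
`(iM)`, `(eMI)`, `(I_ω)` and `(eMF)`, then `(μ⊆⊇)` holds: `f(X) ⊆ Y` and
`f(Y) ⊆ X` imply `f(X) = f(Y)`.  Moreover the converse fails: there is a
system (on `U = {a,b,c}`, modelled as `Fin 3`, with `F({a,b}) = {{a,b},{a}}`
and `F(Z) = {Z}` otherwise) in which `(μ⊆⊇)` holds for the induced `f` but
`(eMI)` fails. -/
theorem stmt19 {α : Type*} (I : Set α → Set (Set α)) (f : Set α → Set α)
    (hsub : ∀ X A : Set α, A ∈ I X → A ⊆ X)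
    -- f X is the smallest element of F(X)
    (hf : ∀ X : Set α, (f X ⊆ X ∧ X \ f X ∈ I X) ∧
      ∀ A : Set α, A ⊆ X → X \ A ∈ I X → f X ⊆ A) :
    -- (iM), (eMI), (I_ω), (eMF) imply (μ⊆⊇)
    (((∀ X A B : Set α, A ⊆ B → B ∈ I X → A ∈ I X) ∧
      (∀ X Y : Set α, X ⊆ Y → I X ⊆ I Y) ∧
      (∀ X A B : Set α, A ∈ I X → B ∈ I X → A ∪ B ∈ I X) ∧
      (∀ X Y A : Set α, X ⊆ Y → A ⊆ X → Y \ A ∈ I Y → X \ A ∈ I X)) →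
      ∀ X Y : Set α, f X ⊆ Y → f Y ⊆ X → f X = f Y)
    ∧
    -- the converse fails
    (∃ (J : Set (Fin 3) → Set (Set (Fin 3))) (g : Set (Fin 3) → Set (Fin 3)),
      (∀ X A : Set (Fin 3), X.Nonempty → A ∈ J X → A ⊆ X) ∧
      -- g X is the smallest element of the filter induced by J
      (∀ X : Set (Fin 3), X.Nonempty → ((g X ⊆ X ∧ X \ g X ∈ J X) ∧
        ∀ A : Set (Fin 3), A ⊆ X → X \ A ∈ J X → g X ⊆ A)) ∧
      -- (μ⊆⊇) holds
      (∀ X Y : Set (Fin 3), X.Nonempty → Y.Nonempty →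
        g X ⊆ Y → g Y ⊆ X → g X = g Y) ∧
      -- but (eMI) fails
      ¬ (∀ X Y : Set (Fin 3), X.Nonempty → Y.Nonempty → X ⊆ Y →
          J X ⊆ J Y)) := by
  constructor
  · rintro ⟨hiM, heMI, hIω, heMF⟩ X Y hXY hYX
    -- key lemma: if f X ⊆ Y then f X = f (X ∩ Y)
    have key : ∀ X Y : Set α, f X ⊆ Y → f X = f (X ∩ Y) := by
      intro X Y hXY
      set Z := X ∩ Y with hZ
      have hZX : Z ⊆ X := inter_subset_left
      have hfXZ : f X ⊆ Z := subset_inter (hf X).1.1 hXY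
      have h1 : Z \ f X ∈ I Z := heMF Z X (f X) hZX hfXZ (hf X).1.2
      have hZle : f Z ⊆ f X := (hf Z).2 (f X) hfXZ h1
      -- other direction
      have hXmY : X \ Y ∈ I X :=
        hiM X (X \ Y) (X \ f X) (diff_subset_diff_right hXY) (hf X).1.2
      have hZd : Z \ f Z ∈ I X := heMI Z X hZX (hf Z).1.2
      have hu : (X \ Y) ∪ (Z \ f Z) ∈ I X := hIω X _ _ hXmY hZd
      have hsubd : X \ f Z ⊆ (X \ Y) ∪ (Z \ f Z) := by
        rintro x ⟨hx, hnx⟩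
        by_cases hy : x ∈ Y
        · exact Or.inr ⟨⟨hx, hy⟩, hnx⟩
        · exact Or.inl ⟨hx, hy⟩
      have h2 : X \ f Z ∈ I X := hiM X _ _ hsubd hu
      have hXle : f X ⊆ f Z := (hf X).2 (f Z) ((hf Z).1.1.trans hZX) h2
      exact subset_antisymm hXle hZle
    have e1 : f X = f (X ∩ Y) := key X Y hXY
    have e2 : f Y = f (Y ∩ X) := key Y X hYX
    rw [inter_comm] at e2
    rw [e1, e2]
  · classical
    refine ⟨fun X => if X = ({0, 1} : Set (Fin 3)) then {∅, {1}} else {∅},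
      fun X => if X = ({0, 1} : Set (Fin 3)) then {0} else X, ?_, ?_, ?_, ?_⟩
    · intro X A _ hA
      dsimp only at hA
      split_ifs at hA with h
      · rcases hA with hA | hA
        · simp [hA]
        · subst h
          simp only [mem_singleton_iff] at hA
          subst hA
          intro x hx
          simp only [mem_singleton_iff] at hx
          subst hx
          right; rfl
      · simp only [mem_singleton_iff] at hA
        simp [hA]
    · intro X _
      dsimp only
      split_ifs with h
      · subst h
        refine ⟨⟨?_, ?_⟩, ?_⟩
        · intro x hx; simp only [mem_singleton_iff] at hx; subst hx; left; rfl
        · right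
          ext x
          simp only [mem_diff, mem_insert_iff, mem_singleton_iff]
          constructor
          · rintro ⟨h1 | h1, h2⟩
            · exact absurd h1 h2
            · exact h1
          · intro h1; subst h1; exact ⟨Or.inr rfl, by decide⟩
        · intro A hA hdA
          intro x hx
          simp only [mem_singleton_iff] at hx; subst hx
          rcases hdA with hd | hd
          · by_contra hnA
            have : (0 : Fin 3) ∈ ({0, 1} : Set (Fin 3)) \ A := ⟨Or.inl rfl, hnA⟩
            rw [hd] at this; exact this
          · by_contra hnA
            have : (0 : Fin 3) ∈ ({0, 1} : Set (Fin 3)) \ A := ⟨Or.inl rfl, hnA⟩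
            simp only [mem_singleton_iff] at hd
            rw [hd] at this
            simp only [mem_singleton_iff] at this
            exact absurd this (by decide)
      · refine ⟨⟨subset_rfl, ?_⟩, ?_⟩
        · simp
        · intro A hA hdA
          simp only [mem_singleton_iff, diff_eq_empty] at hdA
          exact hdA
    · intro X Y _ _ hXY hYX
      dsimp only at hXY hYX ⊢
      by_cases hXs : X = ({0, 1} : Set (Fin 3)) <;>
        by_cases hYs : Y = ({0, 1} : Set (Fin 3))
      · simp [hXs, hYs]
      · rw [if_pos hXs, if_neg hYs] at *
        -- hXY : {0} ⊆ Y, hYX : Y ⊆ {0,1}, Y ≠ {0,1}; show {0} = Y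
        have h0 : (0 : Fin 3) ∈ Y := hXY rfl
        have h1 : (1 : Fin 3) ∉ Y := by
          intro h1
          apply hYs
          apply subset_antisymm (hXs ▸ hYX)
          intro x hx
          rcases hx with hx | hx
          · subst hx; exact h0
          · simp only [mem_singleton_iff] at hx; subst hx; exact h1
        apply subset_antisymm (by intro x hx; simp only [mem_singleton_iff] at hx; subst hx; exact h0)
        intro x hx
        rcases (hXs ▸ hYX) hx with h | h
        · simp [h]
        · simp only [mem_singleton_iff] at h; subst h; exact absurd hx h1
      · rw [if_neg hXs, if_pos hYs] at *
        have h0 : (0 : Fin 3) ∈ X := hYX rfl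
        have h1 : (1 : Fin 3) ∉ X := by
          intro h1
          apply hXs
          apply subset_antisymm (hYs ▸ hXY)
          intro x hx
          rcases hx with hx | hx
          · subst hx; exact h0
          · simp only [mem_singleton_iff] at hx; subst hx; exact h1
        apply subset_antisymm
        · intro x hx
          rcases (hYs ▸ hXY) hx with h | h
          · simp [h]
          · simp only [mem_singleton_iff] at h; subst h; exact absurd hx h1
        · intro x hx; simp only [mem_singleton_iff] at hx; subst hx; exact h0
      · rw [if_neg hXs, if_neg hYs] at *
        exact subset_antisymm hXY hYX
    · intro h
      have huniv : (univ : Set (Fin 3)) ≠ {0, 1} := by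
        intro he
        have : (2 : Fin 3) ∈ ({0, 1} : Set (Fin 3)) := he ▸ mem_univ 2
        rcases this with h2 | h2
        · exact absurd h2 (by decide)
        · simp only [mem_singleton_iff] at h2; exact absurd h2 (by decide)
      have := h {0, 1} univ ⟨0, Or.inl rfl⟩ ⟨0, mem_univ 0⟩ (subset_univ _)
      dsimp only at this
      rw [if_pos rfl, if_neg huniv] at this
      have := this (Or.inr rfl)
      simp only [mem_singleton_iff] at this
      have h1 : (1 : Fin 3) ∈ ({1} : Set (Fin 3)) := rfl
      rw [this] at h1
      exact h1
end
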